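/- For every directed path a in the square annulus X, the set T = {t ∈ [0,1] : a₁(t) ∈ (1/3, 2/3)} is nonempty, and exactly one of the following holds: (i) a passes below the obstruction, i.e. a₂(t) ≤ 1/3 for every t ∈ T; (ii) a passes above the obstruction, i.e. a₂(t) ≥ 2/3 for every t ∈ T. (From the analysis of the square annulus in 2.1.) -/
import Mathlib


open Set

/-- The obstruction: the open square `(1/3, 2/3) × (1/3, 2/3)`. -/
def Qobs : Set (ℝ × ℝ) := Ioo (1/3 : ℝ) (2/3) ×ˢ Ioo (1/3 : ℝ) (2/3)

/-- A directed path in the square annulus `X = [0,1]² \ Q`: a continuous map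
`a : [0,1] → [0,1]²` avoiding `Q`, with nondecreasing coordinates, from `(0,0)` to `(1,1)`. -/
def DiPath (Q : Set (ℝ × ℝ)) (a : ℝ → ℝ × ℝ) : Prop :=
  ContinuousOn a (Icc 0 1) ∧
  (∀ t ∈ Icc (0:ℝ) 1, a t ∈ Icc (0:ℝ) 1 ×ˢ Icc (0:ℝ) 1) ∧
  (∀ t ∈ Icc (0:ℝ) 1, a t ∉ Q) ∧
  MonotoneOn (fun t => (a t).1) (Icc 0 1) ∧
  MonotoneOn (fun t => (a t).2) (Icc 0 1) ∧
  a 0 = (0, 0) ∧ a 1 = (1, 1)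

/-- `a` passes below the obstruction. -/
def Below (a : ℝ → ℝ × ℝ) : Prop :=
  ∀ t ∈ Icc (0:ℝ) 1, (a t).1 ∈ Ioo (1/3 : ℝ) (2/3) → (a t).2 ≤ 1/3

/-- `a` passes above the obstruction. -/
def Above (a : ℝ → ℝ × ℝ) : Prop :=
  ∀ t ∈ Icc (0:ℝ) 1, (a t).1 ∈ Ioo (1/3 : ℝ) (2/3) → (a t).2 ≥ 2/3

/-- Every directed path in the square annulus meets the vertical strip
`(1/3, 2/3) × ℝ`, and passes either below the obstruction or above it, but not both.
(From the analysis of the square annulus in 2.1.) -/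
theorem diPath_below_xor_above (a : ℝ → ℝ × ℝ) (ha : DiPath Qobs a) :
    {t ∈ Icc (0:ℝ) 1 | (a t).1 ∈ Ioo (1/3 : ℝ) (2/3)}.Nonempty ∧
    Xor' (Below a) (Above a) := by
  obtain ⟨hcont, _hbox, hQ, hm1, hm2, h0, h1⟩ := ha
  have hcont1 : ContinuousOn (fun t => (a t).1) (Icc 0 1) := hcont.fst
  have hcont2 : ContinuousOn (fun t => (a t).2) (Icc 0 1) := hcont.snd
  -- T nonempty via IVT on first coordinate
  have hsub := intermediate_value_Icc (by norm_num : (0:ℝ) ≤ 1) hcont1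
  have hmem : (1/2 : ℝ) ∈ Icc ((a 0).1) ((a 1).1) := by
    rw [h0, h1]; norm_num
  obtain ⟨t₀, ht₀, ha₀⟩ := hsub hmem
  have hT : {t ∈ Icc (0:ℝ) 1 | (a t).1 ∈ Ioo (1/3 : ℝ) (2/3)}.Nonempty := by
    refine ⟨t₀, ht₀, ?_⟩
    rw [show (a t₀).1 = 1/2 from ha₀]; norm_num
  -- avoiding Q means: in the strip, second coord is ≤ 1/3 or ≥ 2/3
  have hside : ∀ t ∈ Icc (0:ℝ) 1, (a t).1 ∈ Ioo (1/3 : ℝ) (2/3) →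
      (a t).2 ≤ 1/3 ∨ (a t).2 ≥ 2/3 := by
    intro t ht h1t
    by_contra hc
    push_neg at hc
    exact hQ t ht ⟨h1t, by constructor <;> linarith [hc.1, hc.2]⟩
  have hnotboth : ¬ (Below a ∧ Above a) := by
    rintro ⟨hb, habove⟩
    have h1 := hb t₀ ht₀ (by rw [show (a t₀).1 = 1/2 from ha₀]; norm_num)
    have h2 := habove t₀ ht₀ (by rw [show (a t₀).1 = 1/2 from ha₀]; norm_num)
    linarith
  refine ⟨hT, ?_⟩
  by_cases hb : Below a
  · exact Or.inl ⟨hb, fun hab => hnotboth ⟨hb, hab⟩⟩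
  · -- Below fails: get s with (a s).2 ≥ 2/3 in the strip; show Above holds
    rw [Below] at hb
    push_neg at hb
    obtain ⟨s, hs, hs1, hs2⟩ := hb
    have hs2' : (a s).2 ≥ 2/3 := by
      rcases hside s hs hs1 with h | h
      · exact absurd h (by linarith)
      · exact h
    have hab : Above a := by
      intro t ht h1t
      rcases hside t ht h1t with h | h
      · -- contradiction: find u between with second coord 1/2
        exfalso
        have hts : t ≤ s := by
          by_contra hts
          push_neg at hts
          have := hm2 hs ht hts.le
          simp only at this
          linarith
        have hIcc : Icc t s ⊆ Icc (0:ℝ) 1 :=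
          Icc_subset_Icc ht.1 hs.2
        have hsub2 := intermediate_value_Icc hts (hcont2.mono hIcc)
        have : (1/2 : ℝ) ∈ Icc ((a t).2) ((a s).2) := ⟨by linarith, by linarith⟩
        obtain ⟨u, hu, hau⟩ := hsub2 this
        have hu' : u ∈ Icc (0:ℝ) 1 := hIcc hu
        have h1u : (a u).1 ∈ Ioo (1/3 : ℝ) (2/3) := by
          constructor
          · have := hm1 ht hu' hu.1
            simp only at this
            linarith [h1t.1]
          · have := hm1 hu' hs hu.2
            simp only at this
            linarith [hs1.2]
        exact hQ u hu' ⟨h1u, by rw [show (a u).2 = 1/2 from hau]; norm_num⟩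
      · exact h
    exact Or.inr ⟨hab, fun hbel => hnotboth ⟨hbel, hab⟩⟩
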